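/- arXiv:1603.07510 — 2 statements merged into one kernel-verified Lean document; each statement's English description precedes it below -/
import Mathlib

section
/- In a Riesz space, two elements x and y are disjoint (i.e., |x| ⊓ |y| = 0) if and only if b(x,y) = 0, where b(x,y) = |x| ⊓ y⁺ − |x| ⊓ y⁻. -/
/-!
Write `|y| = y⁺ ⊔ y⁻`. In a lattice-ordered group the lattice is distributive, so `|x| ⊓ |y| = 0`
exactly when `|x|` is disjoint from both `y⁺` and `y⁻`. Conversely, if `|x| ⊓ y⁺ = |x| ⊓ y⁻`, this
common value lies below `y⁺ ⊓ y⁻ = 0`, hence vanishes.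
-/

/-- Lacey's function `b(x,y) = |x| ⊓ y⁺ − |x| ⊓ y⁻`. -/
def bLacey {E : Type*} [Lattice E] [AddCommGroup E] (x y : E) : E :=
  |x| ⊓ (y ⊔ 0) - |x| ⊓ ((-y) ⊔ 0)

section LatticeOrderedGroup

variable {α : Type*} [Lattice α] [AddCommGroup α] [AddLeftMono α] {a : α}

lemma abs_eq_posPart_sup_negPart (b : α) : |b| = b⁺ ⊔ b⁻ := by
  rw [posPart_def, negPart_def, sup_sup_sup_comm, sup_idem, ← abs.eq_def,
    sup_eq_left.mpr (abs_nonneg b)]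

lemma inf_abs_eq_zero_iff (ha : 0 ≤ a) (b : α) :
    a ⊓ |b| = 0 ↔ a ⊓ b⁺ = 0 ∧ a ⊓ b⁻ = 0 := by
  let : DistribLattice α := AddCommGroup.toDistribLattice α
  rw [abs_eq_posPart_sup_negPart, inf_sup_left]
  refine ⟨fun h ↦ ⟨?_, ?_⟩, fun ⟨hp, hn⟩ ↦ by rw [hp, hn, sup_idem]⟩
  · exact le_antisymm (h ▸ le_sup_left) (le_inf ha (posPart_nonneg b))
  · exact le_antisymm (h ▸ le_sup_right) (le_inf ha (negPart_nonneg b))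

lemma inf_posPart_eq_inf_negPart_iff (ha : 0 ≤ a) (b : α) :
    a ⊓ b⁺ = a ⊓ b⁻ ↔ a ⊓ b⁺ = 0 ∧ a ⊓ b⁻ = 0 := by
  refine ⟨fun h ↦ ?_, fun ⟨hp, hn⟩ ↦ hp.trans hn.symm⟩
  have hp : a ⊓ b⁺ = 0 := le_antisymm
    (posPart_inf_negPart_eq_zero b ▸ le_inf inf_le_right (h ▸ inf_le_right))
    (le_inf ha (posPart_nonneg b))
  exact ⟨hp, h ▸ hp⟩

end LatticeOrderedGroup

theorem stmt3_general {E : Type*} [Lattice E] [AddCommGroup E]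
    [CovariantClass E E (· + ·) (· ≤ ·)] (x y : E) :
    |x| ⊓ |y| = 0 ↔ bLacey x y = 0 := by
  rw [inf_abs_eq_zero_iff (abs_nonneg x), ← inf_posPart_eq_inf_negPart_iff (abs_nonneg x)]
  exact sub_eq_zero.symm

/-- In a Riesz space, `x` and `y` are disjoint iff `b(x,y) = 0`. -/
theorem stmt3 {E : Type*} [Lattice E] [AddCommGroup E] [Module ℝ E]
    [CovariantClass E E (· + ·) (· ≤ ·)] (x y : E) :
    |x| ⊓ |y| = 0 ↔ bLacey x y = 0 :=
  stmt3_general x y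
end

section
/- Let X be a Riesz space, P a band projection on X, U = 2P − I the associated sign change, and b(x,y) = |x| ⊓ y⁺ − |x| ⊓ y⁻ Lacey's function. Then b(Ux, Uy) = U(b(x, y)) for all x, y ∈ X. -/
section LatticeOrderedAddCommGroup

variable {E : Type*} [Lattice E] [AddCommGroup E] {a b c : E}

lemma inf_eq_zero_of_le_of_le {a' b' : E} (h : a ⊓ b = 0) (ha' : 0 ≤ a') (hb' : 0 ≤ b')
    (ha : a' ≤ a) (hb : b' ≤ b) : a' ⊓ b' = 0 :=
  le_antisymm (h ▸ inf_le_inf ha hb) (le_inf ha' hb')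

lemma bLacey_neg_neg (x y : E) : bLacey (-x) (-y) = -bLacey x y := by
  simp only [bLacey, abs_neg, neg_neg, neg_sub]

variable [AddLeftMono E]

lemma posPart_le_abs (a : E) : a⁺ ≤ |a| :=
  sup_le (le_abs_self a) (abs_nonneg a)

lemma negPart_le_abs (a : E) : a⁻ ≤ |a| := by
  simpa only [posPart_neg, abs_neg] using posPart_le_abs (-a)

lemma add_inf_eq_zero (ha : 0 ≤ a) (hb : 0 ≤ b) (hc : 0 ≤ c) (hac : a ⊓ c = 0)
    (hbc : b ⊓ c = 0) : (a + b) ⊓ c = 0 := by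
  refine le_antisymm ?_ (le_inf (add_nonneg ha hb) hc)
  calc (a + b) ⊓ c ≤ (a + b) ⊓ (a + c) ⊓ ((c + b) ⊓ (c + c)) :=
        le_inf (le_inf inf_le_left (inf_le_right.trans (le_add_of_nonneg_left ha)))
          (le_inf (inf_le_right.trans (le_add_of_nonneg_right hb))
            (inf_le_right.trans (le_add_of_nonneg_right hc)))
    _ = a ⊓ c + b ⊓ c := by rw [inf_add, add_inf, add_inf]
    _ = 0 := by rw [hac, hbc, add_zero]

lemma posPart_sub_of_inf_eq_zero (h : a ⊓ b = 0) : (a - b)⁺ = a := by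
  have := inf_eq_sub_posPart_sub a b
  rw [h] at this
  exact (sub_eq_zero.1 this.symm).symm

lemma posPart_add_of_abs_inf_abs_eq_zero (h : |a| ⊓ |b| = 0) : (a + b)⁺ = a⁺ + b⁺ := by
  have hsplit : a + b = (a⁺ + b⁺) - (a⁻ + b⁻) := by
    conv_lhs => rw [← posPart_sub_negPart a, ← posPart_sub_negPart b]
    abel
  have hneg_inf_posPart_a : (a⁻ + b⁻) ⊓ a⁺ = 0 :=
    add_inf_eq_zero (negPart_nonneg a) (negPart_nonneg b) (posPart_nonneg a)
      (by rw [inf_comm, posPart_inf_negPart_eq_zero])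
      (inf_eq_zero_of_le_of_le (inf_comm |a| |b| ▸ h) (negPart_nonneg b) (posPart_nonneg a)
        (negPart_le_abs b) (posPart_le_abs a))
  have hneg_inf_posPart_b : (a⁻ + b⁻) ⊓ b⁺ = 0 :=
    add_inf_eq_zero (negPart_nonneg a) (negPart_nonneg b) (posPart_nonneg b)
      (inf_eq_zero_of_le_of_le h (negPart_nonneg a) (posPart_nonneg b)
        (negPart_le_abs a) (posPart_le_abs b))
      (by rw [inf_comm, posPart_inf_negPart_eq_zero])
  have hinf : (a⁺ + b⁺) ⊓ (a⁻ + b⁻) = 0 :=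
    add_inf_eq_zero (posPart_nonneg a) (posPart_nonneg b)
      (add_nonneg (negPart_nonneg a) (negPart_nonneg b))
      (by rw [inf_comm, hneg_inf_posPart_a]) (by rw [inf_comm, hneg_inf_posPart_b])
  rw [hsplit, posPart_sub_of_inf_eq_zero hinf]

lemma map_bLacey {E' F : Type*} [Lattice E'] [AddCommGroup E'] [AddLeftMono E']
    [FunLike F E E'] [AddMonoidHomClass F E E'] (f : F)
    (hf : ∀ a b, f (a ⊔ b) = f a ⊔ f b) (x y : E) :
    f (bLacey x y) = bLacey (f x) (f y) := by
  have hinf : ∀ a b, f (a ⊓ b) = f a ⊓ f b := fun a b => by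
    rw [← add_sub_cancel_right (a ⊓ b) (a ⊔ b), inf_add_sup, map_sub, map_add, hf,
      ← inf_add_sup (f a) (f b), add_sub_cancel_right]
  simp only [bLacey, abs, map_sub, hinf, hf, map_neg, map_zero]

end LatticeOrderedAddCommGroup

structure IsBandProjection {E : Type*} [Lattice E] [AddCommGroup E] (P : E →+ E) : Prop where
  map_nonneg : ∀ x, 0 ≤ x → 0 ≤ P x
  sub_map_nonneg : ∀ x, 0 ≤ x → 0 ≤ x - P x
  disjoint : ∀ x y, |P x| ⊓ |y - P y| = 0

namespace IsBandProjection

variable {E : Type*} [Lattice E] [AddCommGroup E] [AddLeftMono E] {P : E →+ E}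

lemma compl (hP : IsBandProjection P) : IsBandProjection (AddMonoidHom.id E - P) where
  map_nonneg x hx := by simpa using hP.sub_map_nonneg x hx
  sub_map_nonneg x hx := by simpa using hP.map_nonneg x hx
  disjoint x y := by simpa [inf_comm] using hP.disjoint y x

lemma map_eq_self_of_le_abs (hP : IsBandProjection P) {a t : E} (ht : 0 ≤ t) (h : t ≤ |P a|) :
    P t = t := by
  have hnonneg := hP.sub_map_nonneg t ht
  have hle : t - P t ≤ |P a| ⊓ |t - P t| :=
    le_inf ((sub_le_self t (hP.map_nonneg t ht)).trans h) (le_abs_self _)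
  rw [hP.disjoint a t] at hle
  exact (sub_eq_zero.1 (le_antisymm hle hnonneg)).symm

lemma map_eq_zero_of_le_abs (hP : IsBandProjection P) {a t : E} (ht : 0 ≤ t)
    (h : t ≤ |a - P a|) : P t = 0 := by
  have hnonneg := hP.map_nonneg t ht
  have hle : P t ≤ |P t| ⊓ |a - P a| :=
    le_inf (le_abs_self _) ((sub_nonneg.1 (hP.sub_map_nonneg t ht)).trans h)
  rw [hP.disjoint t a] at hle
  exact le_antisymm hle hnonneg

lemma map_map (hP : IsBandProjection P) (a : E) : P (P a) = P a := by
  conv_lhs => rw [← posPart_sub_negPart (P a)]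
  rw [map_sub, hP.map_eq_self_of_le_abs (posPart_nonneg _) (posPart_le_abs _),
    hP.map_eq_self_of_le_abs (negPart_nonneg _) (negPart_le_abs _), posPart_sub_negPart]

lemma map_posPart (hP : IsBandProjection P) (a : E) : P a⁺ = (P a)⁺ := by
  have hsplit : a⁺ = (P a)⁺ + (a - P a)⁺ := by
    rw [← posPart_add_of_abs_inf_abs_eq_zero (hP.disjoint a a), add_sub_cancel]
  rw [hsplit, map_add, hP.map_eq_self_of_le_abs (posPart_nonneg _) (posPart_le_abs _),
    hP.map_eq_zero_of_le_abs (posPart_nonneg _) (posPart_le_abs _), add_zero]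

lemma map_sup (hP : IsBandProjection P) (a b : E) : P (a ⊔ b) = P a ⊔ P b := by
  rw [sup_eq_add_posPart_sub, sup_eq_add_posPart_sub, map_add, hP.map_posPart, map_sub]

lemma map_bLacey (hP : IsBandProjection P) (x y : E) :
    P (bLacey x y) = bLacey (P x) (P y) :=
  _root_.map_bLacey P hP.map_sup x y

lemma bLacey_two_nsmul_sub (hP : IsBandProjection P) (x y : E) :
    bLacey (2 • P x - x) (2 • P y - y) = 2 • P (bLacey x y) - bLacey x y := by
  set z := bLacey (2 • P x - x) (2 • P y - y)
  have hP_sign : ∀ a : E, P (2 • P a - a) = P a := fun a => by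
    rw [map_sub, map_nsmul, hP.map_map, two_nsmul, add_sub_cancel_right]
  have hQ_sign : ∀ a : E, (2 • P a - a) - P (2 • P a - a) = -(a - P a) := fun a => by
    rw [hP_sign, two_nsmul]
    abel
  have hPz : P z = P (bLacey x y) := by
    rw [hP.map_bLacey, hP_sign, hP_sign, hP.map_bLacey]
  have hQz : z - P z = -(bLacey x y - P (bLacey x y)) := by
    have hQ := hP.compl.map_bLacey
    simp only [AddMonoidHom.sub_apply, AddMonoidHom.id_apply] at hQ
    rw [hQ, hQ_sign, hQ_sign, bLacey_neg_neg, hQ]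
  calc z = P z + (z - P z) := (add_sub_cancel _ _).symm
    _ = 2 • P (bLacey x y) - bLacey x y := by
      rw [hQz, hPz, two_nsmul]
      abel

end IsBandProjection

theorem stmt15_general {E : Type*} [Lattice E] [AddCommGroup E] [Module ℝ E]
    [CovariantClass E E (· + ·) (· ≤ ·)]
    (P : E →ₗ[ℝ] E)
    (hpos : ∀ x : E, 0 ≤ x → 0 ≤ P x)
    (hpos' : ∀ x : E, 0 ≤ x → 0 ≤ x - P x)
    (hdisj : ∀ x y : E, |P x| ⊓ |y - P y| = 0) :
    ∀ x y : E,
      bLacey (2 • P x - x) (2 • P y - y) = 2 • P (bLacey x y) - bLacey x y :=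
  (IsBandProjection.mk (P := P.toAddMonoidHom) hpos hpos' hdisj).bLacey_two_nsmul_sub

/-- If `P` is a band projection on a Riesz space and `U = 2P − I` the associated
sign change, then `b(Ux, Uy) = U(b(x,y))` for Lacey's function `b`. -/
theorem stmt15 {E : Type*} [Lattice E] [AddCommGroup E] [Module ℝ E]
    [CovariantClass E E (· + ·) (· ≤ ·)]
    (P : E →ₗ[ℝ] E)
    (hpos : ∀ x : E, 0 ≤ x → 0 ≤ P x)
    (hpos' : ∀ x : E, 0 ≤ x → 0 ≤ x - P x)
    (hidem : ∀ x : E, P (P x) = P x)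
    (hdisj : ∀ x y : E, |P x| ⊓ |y - P y| = 0) :
    ∀ x y : E,
      bLacey (2 • P x - x) (2 • P y - y) = 2 • P (bLacey x y) - bLacey x y :=
  stmt15_general P hpos hpos' hdisj
end
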